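/- For every n ≥ 1, every finite bridge-addable set 𝒢ₙ of graphs on n vertices, and every i ≥ 1, one has i·|𝒢ₙ^{(i+1)}| ≤ |𝒢ₙ^{(i)}|. -/

import Mathlib

open Filter

/-- The graph obtained from `G` by adding the edge `uv`. -/
def addEdge {n : ℕ} (G : SimpleGraph (Fin n)) (u v : Fin n) : SimpleGraph (Fin n) :=
  G ⊔ SimpleGraph.fromEdgeSet {s(u, v)}

/-- A set of graphs on `n` vertices is bridge-addable if it is closed under adding an
edge between two vertices lying in distinct connected components. -/
def BridgeAddable {n : ℕ} (𝒢 : Set (SimpleGraph (Fin n))) : Prop :=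
  ∀ G ∈ 𝒢, ∀ u v : Fin n, ¬G.Reachable u v → addEdge G u v ∈ 𝒢

/-- The number of connected components of a graph. -/
noncomputable def numComponents {n : ℕ} (G : SimpleGraph (Fin n)) : ℕ :=
  Nat.card G.ConnectedComponent

/-- A bridge-addable class of graphs: for each `n ≥ 1`, a nonempty finite
bridge-addable set of graphs on `n` vertices. -/
def IsBridgeAddableClass (𝒢 : ∀ n : ℕ, Set (SimpleGraph (Fin n))) : Prop :=
  ∀ n : ℕ, 1 ≤ n → (𝒢 n).Finite ∧ (𝒢 n).Nonempty ∧ BridgeAddable (𝒢 n)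

/-- The probability that a uniformly random element of `𝒢 n` is connected. -/
noncomputable def connProb (𝒢 : ∀ n : ℕ, Set (SimpleGraph (Fin n))) (n : ℕ) : ℝ :=
  ({G ∈ 𝒢 n | G.Connected}.ncard : ℝ) / ((𝒢 n).ncard : ℝ)

/-- A class is `ζ`-tight if eventually the probability of being connected is at
most `(1+ζ)e^{-1/2}`. -/
def ZetaTight (ζ : ℝ) (𝒢 : ∀ n : ℕ, Set (SimpleGraph (Fin n))) : Prop :=
  ∃ n₀ : ℕ, ∀ n : ℕ, n₀ ≤ n → connProb 𝒢 n ≤ (1 + ζ) * Real.exp (-(1/2))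

/-- A class is tight if the probability of being connected tends to `e^{-1/2}`. -/
def Tight (𝒢 : ∀ n : ℕ, Set (SimpleGraph (Fin n))) : Prop :=
  Tendsto (connProb 𝒢) atTop (nhds (Real.exp (-(1/2))))

/-- The largest label of a vertex in a connected component. -/
noncomputable def maxLabel {n : ℕ} {G : SimpleGraph (Fin n)} (C : G.ConnectedComponent) : ℕ :=
  sSup ((fun v : Fin n => (v : ℕ)) '' C.supp)

/-- `C` is the largest component of `G`: any other component is strictly smaller, or of the
same order but with a smaller maximal vertex label. -/
def IsLargestComp {n : ℕ} (G : SimpleGraph (Fin n)) (C : G.ConnectedComponent) : Prop :=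
  ∀ D : G.ConnectedComponent, D ≠ C →
    D.supp.ncard < C.supp.ncard ∨ (D.supp.ncard = C.supp.ncard ∧ maxLabel D < maxLabel C)

/-- The set of vertices of `G` lying outside the largest component. -/
def smallSupp {n : ℕ} (G : SimpleGraph (Fin n)) : Set (Fin n) :=
  {v | ¬IsLargestComp G (G.connectedComponentMk v)}

/-- `Small(G)`: the union of all the components of `G` other than the largest one. -/
def smallGraph {n : ℕ} (G : SimpleGraph (Fin n)) : SimpleGraph (smallSupp G) :=
  G.induce (smallSupp G)

/-- `p_∞(f) = e^{-1/2} e^{-|f|} / Aut(f)`. -/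
noncomputable def pInf (V : Type) (f : SimpleGraph V) : ℝ :=
  Real.exp (-(1/2)) * Real.exp (-(Nat.card V : ℝ)) / (Nat.card (f ≃g f) : ℝ)

/-- The vertex set of the connected component of `v` after deleting the edge `vu`. -/
def pendantAt {n : ℕ} (G : SimpleGraph (Fin n)) (v u : Fin n) : Set (Fin n) :=
  ((G.deleteEdges {s(v, u)}).connectedComponentMk v).supp

/-- The vertex set of the connected component of `u` after deleting the edge `vu`. -/
def bulkAt {n : ℕ} (G : SimpleGraph (Fin n)) (v u : Fin n) : Set (Fin n) :=
  ((G.deleteEdges {s(v, u)}).connectedComponentMk u).supp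

lemma mem_pendantAt {n : ℕ} (G : SimpleGraph (Fin n)) (v u : Fin n) : v ∈ pendantAt G v u :=
  rfl

/-- `v` carries a pendant copy of the rooted tree `(T, root)` in `G`: some cut-edge is
incident to `v`, and removing the cut-edge at `v` that separates `v` from the largest
possible component leaves `v` in a component which, rooted at `v`, is isomorphic
to `(T, root)`. -/
def IsPendantCopy {n : ℕ} (G : SimpleGraph (Fin n)) {W : Type} (T : SimpleGraph W)
    (root : W) (v : Fin n) : Prop :=
  ∃ u : Fin n, G.IsBridge s(v, u) ∧
    (∀ u' : Fin n, G.IsBridge s(v, u') →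
      (bulkAt G v u').ncard ≤ (bulkAt G v u).ncard) ∧
    ∃ φ : (G.deleteEdges {s(v, u)}).induce (pendantAt G v u) ≃g T,
      φ ⟨v, mem_pendantAt G v u⟩ = root

/-- `α^G(T)`: the number of pendant copies of the rooted tree `(T, root)` in `G`. -/
noncomputable def alphaCount {n : ℕ} (G : SimpleGraph (Fin n)) {W : Type}
    (T : SimpleGraph W) (root : W) : ℕ :=
  Nat.card {v : Fin n | IsPendantCopy G T root v}

/-- `a_∞(T) = e^{-|T|} / Aut_r(T)`. -/
noncomputable def aInf (W : Type) (T : SimpleGraph W) (root : W) : ℝ :=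
  Real.exp (-(Nat.card W : ℝ)) / (Nat.card {φ : T ≃g T // φ root = root} : ℝ)

/-!
Double count the pairs `(G, (u, v))` with `G ∈ 𝒢^{(i+1)}` and `u, v` in distinct components
of `G`. Adding the edge `uv` gives a graph of `𝒢^{(i)}` in which `uv` is a bridge, and `G` is
recovered by deleting it, so the pairs inject into the pairs `(H, (u, v))` with `H ∈ 𝒢^{(i)}` and
`uv` a bridge of `H`. A graph with `i + 1` components has at least `2i(n - i)` ordered pairs of
vertices in distinct components, while the bridges of a graph with `i` components form a forest
with at least `i` components, hence number at most `n - i`.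
-/

open Finset

theorem Finset.two_mul_mul_sub_le_sum_mul_sub {ι : Type*} (t : Finset ι) (s : ι → ℕ) {n i : ℕ}
    (hpos : ∀ c ∈ t, 1 ≤ s c) (hsum : ∑ c ∈ t, s c = n) (hcard : #t = i + 1) :
    2 * i * (n - i) ≤ ∑ c ∈ t, s c * (n - s c) := by
  classical
  have hle (c) (hc : c ∈ t) : s c + i ≤ n := by
    have hrest := card_nsmul_le_sum (t.erase c) s 1 fun d hd => hpos d (mem_of_mem_erase hd)
    rw [card_erase_of_mem hc, hcard, smul_eq_mul, mul_one, Nat.add_sub_cancel] at hrest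
    rw [← hsum, ← add_sum_erase t s hc]
    exact Nat.add_le_add_left hrest _
  -- termwise this is `(s c - 1) * (n - s c - i) ≥ 0`
  have key : ∑ c ∈ t, (i * s c + n + i) ≤ ∑ c ∈ t, (s c * (n - s c) + s c + 2 * i) :=
    sum_le_sum fun c hc => by
      obtain ⟨a, ha⟩ := Nat.exists_eq_add_of_le' (hpos c hc)
      obtain ⟨b, hb⟩ := Nat.exists_eq_add_of_le (hle c hc)
      rw [show n - s c = i + b by omega, hb, ha]
      nlinarith
  simp only [sum_add_distrib, ← mul_sum, sum_const, hcard, hsum, smul_eq_mul] at key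
  obtain ⟨c, hc⟩ := t.card_pos.mp (by omega)
  obtain ⟨k, rfl⟩ := Nat.exists_eq_add_of_le (le_of_add_le_right (hle c hc))
  rw [Nat.add_sub_cancel_left]
  nlinarith [Nat.le_mul_self i]

namespace SimpleGraph

variable {V : Type*} {G : SimpleGraph V} {u v : V}

lemma Reachable.of_sup_edge {a b : V} (h : (G ⊔ edge u v).Reachable a b) :
    G.Reachable a b ∨ G.Reachable a u ∧ G.Reachable v b ∨ G.Reachable a v ∧ G.Reachable u b := by
  obtain ⟨p⟩ := h
  induction p with
  | nil => exact .inl .rfl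
  | cons hadj _ ih =>
    rw [sup_adj, edge_adj] at hadj
    rcases hadj with hadj | ⟨⟨rfl, rfl⟩ | ⟨rfl, rfl⟩, -⟩ <;>
      grind [Adj.reachable, Reachable.trans, Reachable.symm, Reachable.refl]

lemma card_connectedComponent_sup_edge [Finite V] (h : ¬G.Reachable u v) :
    Nat.card (G ⊔ edge u v).ConnectedComponent + 1 = Nat.card G.ConnectedComponent := by
  set φ := ConnectedComponent.map (Hom.ofLE (le_sup_left : G ≤ G ⊔ edge u v))
  set S : Set G.ConnectedComponent := Set.univ \ {G.connectedComponentMk v}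
  have hS {w : V} : G.connectedComponentMk w ∈ S ↔ ¬G.Reachable w v := by
    simp [S, ConnectedComponent.eq]
  have hinj : S.InjOn φ := by
    rintro ⟨a⟩ ha ⟨b⟩ hb hab
    rcases (ConnectedComponent.exact hab).of_sup_edge with hab | hab | hab
    · exact ConnectedComponent.sound hab
    · exact absurd hab.2.symm (hS.mp hb)
    · exact absurd hab.1 (hS.mp ha)
  have himage : φ '' S = Set.univ := by
    refine Set.eq_univ_of_forall (ConnectedComponent.ind fun w => ?_)
    by_cases hw : G.Reachable w v
    · have huv : (G ⊔ edge u v).Adj u v :=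
        Or.inr ((edge_adj ..).mpr ⟨.inl ⟨rfl, rfl⟩, fun e => h (e ▸ .rfl)⟩)
      exact ⟨_, hS.mpr h, ConnectedComponent.sound
        (huv.reachable.trans (hw.symm.mono le_sup_left))⟩
    · exact ⟨_, hS.mpr hw, rfl⟩
  rw [← Set.ncard_univ, ← himage, hinj.ncard_image, ← Set.ncard_univ,
    Set.ncard_sdiff_singleton_add_one (Set.mem_univ _)]

-- `G.IsBridge s(u, v)` alone also holds for non-adjacent `u`, `v` in distinct components.
def bridgeGraph (G : SimpleGraph V) : SimpleGraph V where
  Adj u v := G.Adj u v ∧ G.IsBridge s(u, v)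
  symm := ⟨fun _ _ h => ⟨h.1.symm, Sym2.eq_swap ▸ h.2⟩⟩
  loopless := ⟨fun _ h => G.loopless.irrefl _ h.1⟩

lemma bridgeGraph_le : G.bridgeGraph ≤ G := fun _ _ h => h.1

lemma isAcyclic_bridgeGraph : G.bridgeGraph.IsAcyclic :=
  isAcyclic_iff_forall_adj_isBridge.mpr fun _ _ h => h.2.anti bridgeGraph_le

lemma deleteEdges_sup_edge (h : G.Adj u v) : G.deleteEdges {s(u, v)} ⊔ edge u v = G := by
  rw [deleteEdges, ← edge, sdiff_sup_self, sup_edge_of_adj _ h]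

lemma IsAcyclic.ncard_edgeSet_add_card_connectedComponent_le [Finite V] (hG : G.IsAcyclic) :
    G.edgeSet.ncard + Nat.card G.ConnectedComponent ≤ Nat.card V := by
  induction G using WellFoundedLT.induction with
  | _ G ih =>
  by_cases hE : G.edgeSet = ∅
  · rw [hE, Set.ncard_empty, zero_add]
    exact Nat.card_le_card_of_surjective _ Quot.mk_surjective
  obtain ⟨e, he⟩ := Set.nonempty_iff_ne_empty.mpr hE
  induction e using Sym2.ind with
  | _ u v =>
  set G' := G.deleteEdges {s(u, v)}
  have hlt : G' < G := deleteEdges_le _ |>.lt_of_ne fun h => by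
    rw [← h, edgeSet_deleteEdges] at he
    exact he.2 rfl
  have hbridge : ¬G'.Reachable u v := isAcyclic_iff_forall_adj_isBridge.mp hG he
  have hedges : G'.edgeSet.ncard + 1 = G.edgeSet.ncard := by
    rw [edgeSet_deleteEdges, Set.ncard_sdiff_singleton_add_one he]
  have hcomp := card_connectedComponent_sup_edge hbridge
  rw [deleteEdges_sup_edge he] at hcomp
  have hG' := ih G' hlt (hG.anti hlt.le)
  omega

section Counting

open scoped Classical

variable [Fintype V]

lemma card_adj_bridgeGraph_le :
    #{p : V × V | G.bridgeGraph.Adj p.1 p.2} ≤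
      2 * (Fintype.card V - Nat.card G.ConnectedComponent) := by
  have hacyc := (isAcyclic_bridgeGraph (G := G)).ncard_edgeSet_add_card_connectedComponent_le
  have hcomp := ConnectedComponent.card_le_card_of_le (bridgeGraph_le (G := G))
  rw [Set.ncard_eq_toFinset_card', ← edgeFinset.eq_def, Nat.card_eq_fintype_card (α := V)] at hacyc
  have hpairs : 2 * #G.bridgeGraph.edgeFinset = #{p : V × V | G.bridgeGraph.Adj p.1 p.2} :=
    two_mul_card_edgeFinset _
  omega

lemma card_not_reachable_eq_sum :
    #{p : V × V | ¬G.Reachable p.1 p.2} = ∑ C : G.ConnectedComponent,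
      #{v | G.connectedComponentMk v = C} *
        (Fintype.card V - #{v | G.connectedComponentMk v = C}) := by
  rw [card_eq_sum_card_fiberwise (f := fun p => G.connectedComponentMk p.1) (t := univ)
    (fun _ _ => mem_coe.mpr (mem_univ _))]
  refine sum_congr rfl fun C _ => ?_
  rw [← card_compl, ← card_product]
  congr 1
  ext ⟨a, b⟩
  simp only [mem_filter, mem_univ, true_and, mem_product, mem_compl]
  constructor
  · rintro ⟨hab, rfl⟩
    exact ⟨rfl, fun h => hab (ConnectedComponent.exact h.symm)⟩
  · rintro ⟨rfl, hb⟩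
    exact ⟨fun h => hb (ConnectedComponent.sound h).symm, rfl⟩

lemma two_mul_mul_sub_le_card_not_reachable {i : ℕ} (h : Nat.card G.ConnectedComponent = i + 1) :
    2 * i * (Fintype.card V - i) ≤ #{p : V × V | ¬G.Reachable p.1 p.2} := by
  rw [card_not_reachable_eq_sum]
  refine two_mul_mul_sub_le_sum_mul_sub _ _ (fun C _ => ?_) ?_ ?_
  · obtain ⟨v, rfl⟩ := C.exists_rep
    exact card_pos.mpr ⟨v, mem_filter.mpr ⟨mem_univ _, rfl⟩⟩
  · exact (card_eq_sum_card_fiberwise (f := G.connectedComponentMk) (s := univ)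
      fun _ _ => mem_coe.mpr (mem_univ _)).symm.trans card_univ
  · rw [card_univ, ← Nat.card_eq_fintype_card, h]

variable {𝒜 ℬ : Finset (SimpleGraph V)}

lemma card_not_reachable_le_card_adj_bridgeGraph
    (h : ∀ G ∈ 𝒜, ∀ u v, ¬G.Reachable u v → G ⊔ edge u v ∈ ℬ) (u v : V) :
    #{G ∈ 𝒜 | ¬G.Reachable u v} ≤ #{H ∈ ℬ | H.bridgeGraph.Adj u v} := by
  refine card_le_card_of_injOn (· ⊔ edge u v) (fun G hG => ?_) (fun G hG G' hG' hGG' => ?_)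
  · obtain ⟨hG, huv⟩ := mem_filter.mp hG
    have hne : u ≠ v := fun e => huv (e ▸ .rfl)
    refine mem_filter.mpr ⟨h G hG u v huv, Or.inr ((edge_adj ..).mpr ⟨.inl ⟨rfl, rfl⟩, hne⟩), ?_⟩
    exact isBridge_sup_edge.mpr (.of_not_reachable huv)
  · have hG := (mem_filter.mp hG).2
    have hG' := (mem_filter.mp hG').2
    have key := congrArg (· \ edge u v) hGG'
    simpa only [sup_sdiff_right_self, sdiff_edge _ fun h : G.Adj u v => hG h.reachable,
      sdiff_edge _ fun h : G'.Adj u v => hG' h.reachable] using key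

lemma sum_card_not_reachable_le_sum_card_adj_bridgeGraph
    (h : ∀ G ∈ 𝒜, ∀ u v, ¬G.Reachable u v → G ⊔ edge u v ∈ ℬ) :
    ∑ G ∈ 𝒜, #{p : V × V | ¬G.Reachable p.1 p.2} ≤
      ∑ H ∈ ℬ, #{p : V × V | H.bridgeGraph.Adj p.1 p.2} := by
  calc ∑ G ∈ 𝒜, #{p : V × V | ¬G.Reachable p.1 p.2}
      = ∑ p : V × V, #{G ∈ 𝒜 | ¬G.Reachable p.1 p.2} :=
        sum_card_bipartiteAbove_eq_sum_card_bipartiteBelow _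
    _ ≤ ∑ p : V × V, #{H ∈ ℬ | H.bridgeGraph.Adj p.1 p.2} :=
        sum_le_sum fun p _ => card_not_reachable_le_card_adj_bridgeGraph h p.1 p.2
    _ = ∑ H ∈ ℬ, #{p : V × V | H.bridgeGraph.Adj p.1 p.2} :=
        (sum_card_bipartiteAbove_eq_sum_card_bipartiteBelow _).symm

theorem mul_card_filter_card_connectedComponent_eq_succ_le {𝒮 : Finset (SimpleGraph V)}
    (h𝒮 : ∀ G ∈ 𝒮, ∀ u v, ¬G.Reachable u v → G ⊔ edge u v ∈ 𝒮) (i : ℕ) :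
    i * #{G ∈ 𝒮 | Nat.card G.ConnectedComponent = i + 1} ≤
      #{G ∈ 𝒮 | Nat.card G.ConnectedComponent = i} := by
  set 𝒜 := {G ∈ 𝒮 | Nat.card G.ConnectedComponent = i + 1}
  set ℬ := {G ∈ 𝒮 | Nat.card G.ConnectedComponent = i}
  obtain h𝒜 | ⟨G₀, hG₀⟩ := 𝒜.eq_empty_or_nonempty
  · simp [h𝒜]
  have hi : i < Fintype.card V := by
    have hcomp : Nat.card G₀.ConnectedComponent ≤ Nat.card V :=
      Nat.card_le_card_of_surjective _ Quot.mk_surjective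
    rw [(mem_filter.mp hG₀).2, Nat.card_eq_fintype_card] at hcomp
    omega
  have hsup : ∀ G ∈ 𝒜, ∀ u v, ¬G.Reachable u v → G ⊔ edge u v ∈ ℬ := fun G hG u v huv => by
    obtain ⟨hG, hcard⟩ := mem_filter.mp hG
    have hcomp := card_connectedComponent_sup_edge huv
    exact mem_filter.mpr ⟨h𝒮 G hG u v huv, by omega⟩
  have hlow : #𝒜 * (2 * i * (Fintype.card V - i)) ≤
      ∑ G ∈ 𝒜, #{p : V × V | ¬G.Reachable p.1 p.2} :=
    card_nsmul_le_sum _ _ _ fun G hG => two_mul_mul_sub_le_card_not_reachable (mem_filter.mp hG).2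
  have hup : ∑ H ∈ ℬ, #{p : V × V | H.bridgeGraph.Adj p.1 p.2} ≤
      #ℬ * (2 * (Fintype.card V - i)) :=
    sum_le_card_nsmul _ _ _ fun H hH => (mem_filter.mp hH).2 ▸ card_adj_bridgeGraph_le
  have hchain := (hlow.trans (sum_card_not_reachable_le_sum_card_adj_bridgeGraph hsup)).trans hup
  refine Nat.le_of_mul_le_mul_right (c := 2 * (Fintype.card V - i)) ?_ (by omega)
  linarith

end Counting

end SimpleGraph

/-- For every `n ≥ 1`, every finite bridge-addable set `𝒢` of graphs on
`n` vertices, and every `i ≥ 1`, one has `i·|𝒢^{(i+1)}| ≤ |𝒢^{(i)}|`. -/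
theorem bridge_addable_component_count_bound :
    ∀ n : ℕ, 1 ≤ n → ∀ 𝒢 : Set (SimpleGraph (Fin n)), 𝒢.Finite → BridgeAddable 𝒢 →
      ∀ i : ℕ, 1 ≤ i →
        i * ({G ∈ 𝒢 | numComponents G = i + 1}).ncard ≤
          ({G ∈ 𝒢 | numComponents G = i}).ncard := by
  intro n _ 𝒢 h𝒢 hbridge i _
  obtain ⟨𝒮, rfl⟩ := h𝒢.exists_finset_coe
  have hcoe (p : SimpleGraph (Fin n) → Prop) [DecidablePred p] :
      {G ∈ (𝒮 : Set (SimpleGraph (Fin n))) | p G}.ncard = #{G ∈ 𝒮 | p G} := by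
    rw [← Set.ncard_coe_finset, coe_filter]
    rfl
  rw [hcoe, hcoe]
  exact SimpleGraph.mul_card_filter_card_connectedComponent_eq_succ_le hbridge i
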